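/- arXiv:2507.10988 — 6 statements merged into one kernel-verified Lean document; each statement's English description precedes it below -/
import Mathlib

section
/- Let 0 < ℓ ≤ 1, let λ ≥ 0, and let j be a natural number with j ≥ ⌊√λ⌋ + 1. Set w = arcsinh(1/sinh(ℓ/2)). Suppose u : ℝ → ℝ is twice differentiable and satisfies u''(ρ) = (1/4 − λ + (1/4 + 4π²j²/ℓ²)·(1/cosh²ρ))·u(ρ) for all ρ ∈ [0, w], with initial conditions u(0) = 0 and u'(0) = 1. Then ∫₀^{w−1} u(ρ)² dρ ≤ (4/e²) · ∫₀^{w} u(ρ)² dρ. -/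
/-!
On `[0, w]` the potential `V` of `u'' = V u` is at least `1`: since `cosh² w = coth²(ℓ/2)`,
one has `1 / cosh² ρ ≥ tanh²(ℓ/2) ≥ ℓ²/9`, and `π² ≥ 9`, `λ < j²` give `V ≥ 1/4 + 3 j²`.
A first-zero argument shows that `u'` stays positive, so `u ≥ 0`; then
`(e^ρ (u' − u))' = e^ρ (V − 1) u ≥ 0` gives `u' ≥ u`, i.e. `e^{-ρ} u` is nondecreasing.
Hence `e · u(ρ) ≤ u(ρ + 1)`, and integrating the square gives
`e² ∫₀^{w−1} u² ≤ ∫₁^w u² ≤ ∫₀^w u²`.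
-/
open Real Set intervalIntegral

lemma monotoneOn_Icc_of_deriv_nonneg_Ioo {f : ℝ → ℝ} {a b : ℝ} (hf : Differentiable ℝ f)
    (h : ∀ x ∈ Ioo a b, 0 ≤ deriv f x) : MonotoneOn f (Icc a b) :=
  monotoneOn_of_deriv_nonneg (convex_Icc a b) hf.continuous.continuousOn hf.differentiableOn
    (by rwa [interior_Icc])

section SecondOrderGrowth

variable {u V : ℝ → ℝ} {w : ℝ}

theorem deriv_pos_of_deriv_deriv_eq_mul (hu : Differentiable ℝ u)
    (hu' : Differentiable ℝ (deriv u)) (hode : ∀ ρ ∈ Icc 0 w, deriv (deriv u) ρ = V ρ * u ρ)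
    (hV : ∀ ρ ∈ Icc 0 w, 0 ≤ V ρ) (h0 : 0 ≤ u 0) (h1 : 0 < deriv u 0) :
    ∀ ρ ∈ Icc 0 w, 0 < deriv u ρ := by
  by_contra! hcon
  set Z := Icc 0 w ∩ deriv u ⁻¹' Iic 0
  have hZbdd : BddBelow Z := ⟨0, fun x hx => hx.1.1⟩
  have htZ : sInf Z ∈ Z :=
    (isClosed_Icc.inter (isClosed_Iic.preimage hu'.continuous)).csInf_mem hcon hZbdd
  set t := sInf Z
  have hzero : deriv u t ≤ 0 := htZ.2
  have ht0 : 0 < t := htZ.1.1.lt_of_ne fun h => hzero.not_gt (h ▸ h1)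
  -- before its first zero `t`, `u'` is positive, so `u ≥ 0` and then `u'' = V u ≥ 0`
  have hbefore : ∀ x ∈ Ioo 0 t, x ∈ Icc 0 w ∧ 0 < deriv u x := fun x hx =>
    have hxw : x ∈ Icc 0 w := ⟨hx.1.le, hx.2.le.trans htZ.1.2⟩
    ⟨hxw, lt_of_not_ge fun hle => (csInf_le hZbdd ⟨hxw, hle⟩).not_gt hx.2⟩
  have hu_mono : MonotoneOn u (Icc 0 t) :=
    monotoneOn_Icc_of_deriv_nonneg_Ioo hu fun x hx => (hbefore x hx).2.le
  have hu'_mono : MonotoneOn (deriv u) (Icc 0 t) := by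
    refine monotoneOn_Icc_of_deriv_nonneg_Ioo hu' fun x hx => ?_
    rw [hode x (hbefore x hx).1]
    exact mul_nonneg (hV x (hbefore x hx).1)
      (h0.trans (hu_mono ⟨le_rfl, ht0.le⟩ ⟨hx.1.le, hx.2.le⟩ hx.1.le))
  linarith [hu'_mono ⟨le_rfl, ht0.le⟩ ⟨ht0.le, le_rfl⟩ ht0.le]

theorem nonneg_of_deriv_deriv_eq_mul (hu : Differentiable ℝ u)
    (hu' : Differentiable ℝ (deriv u)) (hode : ∀ ρ ∈ Icc 0 w, deriv (deriv u) ρ = V ρ * u ρ)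
    (hV : ∀ ρ ∈ Icc 0 w, 0 ≤ V ρ) (h0 : 0 ≤ u 0) (h1 : 0 < deriv u 0) :
    ∀ ρ ∈ Icc 0 w, 0 ≤ u ρ := by
  have hu'_pos := deriv_pos_of_deriv_deriv_eq_mul hu hu' hode hV h0 h1
  have hu_mono : MonotoneOn u (Icc 0 w) :=
    monotoneOn_Icc_of_deriv_nonneg_Ioo hu fun x hx => (hu'_pos x (Ioo_subset_Icc_self hx)).le
  exact fun ρ hρ => h0.trans (hu_mono (left_mem_Icc.2 (hρ.1.trans hρ.2)) hρ hρ.1)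

theorem le_deriv_of_deriv_deriv_eq_mul (hu : Differentiable ℝ u)
    (hu' : Differentiable ℝ (deriv u)) (hode : ∀ ρ ∈ Icc 0 w, deriv (deriv u) ρ = V ρ * u ρ)
    (hV : ∀ ρ ∈ Icc 0 w, 1 ≤ V ρ) (h0 : u 0 = 0) (h1 : 0 < deriv u 0) :
    ∀ ρ ∈ Icc 0 w, u ρ ≤ deriv u ρ := by
  have hu_nonneg := nonneg_of_deriv_deriv_eq_mul hu hu' hode
    (fun ρ hρ => zero_le_one.trans (hV ρ hρ)) h0.ge h1
  have hg : ∀ x, HasDerivAt (fun ρ => exp ρ * (deriv u ρ - u ρ))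
      (exp x * (deriv u x - u x) + exp x * (deriv (deriv u) x - deriv u x)) x := fun x =>
    (hasDerivAt_exp x).mul ((hu' x).hasDerivAt.sub (hu x).hasDerivAt)
  have hg_mono : MonotoneOn (fun ρ => exp ρ * (deriv u ρ - u ρ)) (Icc 0 w) := by
    refine monotoneOn_Icc_of_deriv_nonneg_Ioo (fun x => (hg x).differentiableAt)
      fun x hx => ?_
    have hxw := Ioo_subset_Icc_self hx
    rw [(hg x).deriv, hode x hxw]
    nlinarith [exp_pos x, mul_nonneg (sub_nonneg.2 (hV x hxw)) (hu_nonneg x hxw)]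
  intro ρ hρ
  have hg_ρ := hg_mono (left_mem_Icc.2 (hρ.1.trans hρ.2)) hρ hρ.1
  simp only [exp_zero, h0, sub_zero, one_mul] at hg_ρ
  nlinarith [exp_pos ρ]

theorem exp_sub_mul_le_of_deriv_deriv_eq_mul (hu : Differentiable ℝ u)
    (hu' : Differentiable ℝ (deriv u)) (hode : ∀ ρ ∈ Icc 0 w, deriv (deriv u) ρ = V ρ * u ρ)
    (hV : ∀ ρ ∈ Icc 0 w, 1 ≤ V ρ) (h0 : u 0 = 0) (h1 : 0 < deriv u 0) {s t : ℝ}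
    (hs : 0 ≤ s) (hst : s ≤ t) (ht : t ≤ w) : exp (t - s) * u s ≤ u t := by
  have hgrowth := le_deriv_of_deriv_deriv_eq_mul hu hu' hode hV h0 h1
  have hh : ∀ x, HasDerivAt (fun ρ => exp (-ρ) * u ρ)
      (-exp (-x) * u x + exp (-x) * deriv u x) x := fun x =>
    ((hasDerivAt_neg x).exp.mul (hu x).hasDerivAt).congr_deriv (by ring)
  have hh_mono : MonotoneOn (fun ρ => exp (-ρ) * u ρ) (Icc 0 w) := by
    refine monotoneOn_Icc_of_deriv_nonneg_Ioo (fun x => (hh x).differentiableAt)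
      fun x hx => ?_
    rw [(hh x).deriv]
    nlinarith [exp_pos (-x), hgrowth x (Ioo_subset_Icc_self hx)]
  have hh_st := hh_mono ⟨hs, hst.trans ht⟩ ⟨hs.trans hst, ht⟩ hst
  calc exp (t - s) * u s = exp t * (exp (-s) * u s) := by rw [sub_eq_add_neg, exp_add, mul_assoc]
    _ ≤ exp t * (exp (-t) * u t) := by gcongr
    _ = u t := by rw [← mul_assoc, ← exp_add, add_neg_cancel, exp_zero, one_mul]

end SecondOrderGrowth

theorem mul_integral_le_integral_of_mul_le_comp_add {f : ℝ → ℝ} {a w c : ℝ} (hf : Continuous f)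
    (ha : 0 ≤ a) (haw : a ≤ w) (hf0 : ∀ x ∈ Icc 0 a, 0 ≤ f x)
    (h : ∀ x ∈ Icc 0 (w - a), c * f x ≤ f (x + a)) :
    c * ∫ x in 0..(w - a), f x ≤ ∫ x in 0..w, f x := by
  have hfi : ∀ s t : ℝ, IntervalIntegrable f MeasureTheory.volume s t := hf.intervalIntegrable
  calc c * ∫ x in 0..(w - a), f x = ∫ x in 0..(w - a), c * f x := (integral_const_mul c _).symm
    _ ≤ ∫ x in 0..(w - a), f (x + a) :=
      integral_mono_on (by linarith) ((hfi _ _).const_mul c)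
        ((hf.comp (continuous_add_const a)).intervalIntegrable _ _) h
    _ = ∫ x in a..w, f x := by rw [integral_comp_add_right, zero_add, sub_add_cancel]
    _ ≤ ∫ x in 0..w, f x := by
      rw [← integral_add_adjacent_intervals (hfi 0 a) (hfi a w)]
      exact le_add_of_nonneg_left (integral_nonneg ha hf0)

section Potential

lemma cosh_le_eight_div_seven {y : ℝ} (hy : |y| ≤ 1 / 2) : cosh y ≤ 8 / 7 := by
  have hy2 : y ^ 2 / 2 ≤ 1 / 8 := by nlinarith [sq_abs y, abs_nonneg y]
  calc cosh y ≤ exp (y ^ 2 / 2) := cosh_le_exp_half_sq y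
    _ ≤ 1 / (1 - y ^ 2 / 2) := exp_bound_div_one_sub_of_interval (by positivity) (by linarith)
    _ ≤ 8 / 7 := by rw [div_le_iff₀ (by linarith)]; linarith

lemma one_le_arsinh_inv_sinh {x : ℝ} (h0 : 0 < x) (h1 : x ≤ 1 / 2) :
    1 ≤ arsinh (1 / sinh x) := by
  have hs : 0 < sinh x := sinh_pos_iff.2 h0
  have hsx : sinh x ≤ sinh (1 / 2) := sinh_le_sinh.2 h1
  have hc : cosh (1 / 2) ≤ 8 / 7 := cosh_le_eight_div_seven (by norm_num [abs_of_pos])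
  have hs_half : 0 < sinh (1 / 2) := sinh_pos_iff.2 (by norm_num)
  -- `sinh 1 · sinh (1/2) = 2 sinh² (1/2) cosh (1/2) = 2 (cosh² (1/2) - 1) cosh (1/2) < 1`
  have hsinh_one : sinh 1 = 2 * sinh (1 / 2) * cosh (1 / 2) := by
    rw [← sinh_two_mul]; norm_num
  have hsq := cosh_sq (1 / 2 : ℝ)
  refine (arsinh_sinh 1).ge.trans (arsinh_le_arsinh.2 ?_)
  rw [le_div_iff₀ hs, hsinh_one]
  nlinarith [cosh_pos (1 / 2 : ℝ), mul_le_mul_of_nonneg_left hsx hs_half.le]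

lemma cosh_arsinh_inv_sinh {x : ℝ} (hx : 0 < x) :
    cosh (arsinh (1 / sinh x)) = cosh x / sinh x := by
  have hs : 0 < sinh x := sinh_pos_iff.2 hx
  rw [cosh_arsinh, sqrt_eq_iff_mul_self_eq_of_pos (div_pos (cosh_pos x) hs)]
  field_simp
  rw [cosh_sq]

lemma tanh_le_inv_cosh {x ρ : ℝ} (hx : 0 < x) (hρ : |ρ| ≤ arsinh (1 / sinh x)) :
    tanh x ≤ 1 / cosh ρ := by
  have hs : 0 < sinh x := sinh_pos_iff.2 hx
  have hc : cosh ρ ≤ cosh x / sinh x := by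
    rw [← cosh_arsinh_inv_sinh hx, cosh_le_cosh, abs_of_nonneg (arsinh_nonneg_iff.2 (by positivity))]
    exact hρ
  rw [tanh_eq_sinh_div_cosh, div_le_div_iff₀ (cosh_pos x) (cosh_pos ρ), one_mul]
  exact (le_div_iff₀' hs).1 hc

lemma two_mul_div_three_le_tanh {x : ℝ} (h0 : 0 ≤ x) (h1 : x ≤ 1 / 2) : 2 * x / 3 ≤ tanh x := by
  have hc : cosh x ≤ 8 / 7 := cosh_le_eight_div_seven (by rwa [abs_of_nonneg h0])
  rw [tanh_eq_sinh_div_cosh, le_div_iff₀ (cosh_pos x)]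
  nlinarith [self_le_sinh_iff.2 h0]

noncomputable def potential (ℓ lam : ℝ) (j : ℕ) (ρ : ℝ) : ℝ :=
  1 / 4 - lam + (1 / 4 + 4 * π ^ 2 * (j : ℝ) ^ 2 / ℓ ^ 2) * (1 / cosh ρ ^ 2)

lemma one_le_potential {ℓ lam ρ : ℝ} {j : ℕ} (hℓ0 : 0 < ℓ) (hℓ1 : ℓ ≤ 1)
    (hj : ⌊√lam⌋₊ + 1 ≤ j) (hρ : |ρ| ≤ arsinh (1 / sinh (ℓ / 2))) :
    1 ≤ potential ℓ lam j ρ := by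
  have hlam : lam < (j : ℝ) ^ 2 :=
    lt_sq_of_sqrt_lt ((Nat.lt_floor_add_one _).trans_le (by exact_mod_cast hj))
  have hj1 : (1 : ℝ) ≤ j := by exact_mod_cast (Nat.le_add_left 1 _).trans hj
  have hcosh : ℓ / 3 ≤ 1 / cosh ρ := by
    have := (two_mul_div_three_le_tanh (half_pos hℓ0).le (by linarith)).trans
      (tanh_le_inv_cosh (half_pos hℓ0) hρ)
    linarith
  have hterm : 4 * (j : ℝ) ^ 2 ≤ 4 * π ^ 2 * (j : ℝ) ^ 2 / ℓ ^ 2 * (1 / cosh ρ ^ 2) :=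
    calc 4 * (j : ℝ) ^ 2 ≤ 4 * π ^ 2 * (j : ℝ) ^ 2 / ℓ ^ 2 * (ℓ / 3) ^ 2 := by
          field_simp
          nlinarith [pi_gt_three]
      _ ≤ 4 * π ^ 2 * (j : ℝ) ^ 2 / ℓ ^ 2 * (1 / cosh ρ ^ 2) := by
          rw [← one_div_pow]
          gcongr
  have : 0 ≤ 1 / 4 * (1 / cosh ρ ^ 2) := by positivity
  unfold potential
  nlinarith

end Potential

theorem stmt0_general (ℓ lam : ℝ) (hℓ0 : 0 < ℓ) (hℓ1 : ℓ ≤ 1)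
    (j : ℕ) (hj : j ≥ ⌊Real.sqrt lam⌋₊ + 1)
    (w : ℝ) (hw : w = Real.arsinh (1 / Real.sinh (ℓ / 2)))
    (u : ℝ → ℝ) (hu : Differentiable ℝ u) (hu' : Differentiable ℝ (deriv u))
    (hode : ∀ ρ ∈ Set.Icc 0 w,
      deriv (deriv u) ρ =
        (1 / 4 - lam + (1 / 4 + 4 * Real.pi ^ 2 * (j : ℝ) ^ 2 / ℓ ^ 2)
          * (1 / Real.cosh ρ ^ 2)) * u ρ)
    (h0 : u 0 = 0) (h1 : deriv u 0 = 1) :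
    ∫ ρ in (0:ℝ)..(w - 1), u ρ ^ 2 ≤ 4 / Real.exp 1 ^ 2 * ∫ ρ in (0:ℝ)..w, u ρ ^ 2 := by
  have hw1 : 1 ≤ w := hw ▸ one_le_arsinh_inv_sinh (half_pos hℓ0) (by linarith)
  have hV : ∀ ρ ∈ Icc 0 w, 1 ≤ potential ℓ lam j ρ := fun ρ hρ =>
    one_le_potential hℓ0 hℓ1 hj (by rw [abs_of_nonneg hρ.1, ← hw]; exact hρ.2)
  have hode' : ∀ ρ ∈ Icc 0 w, deriv (deriv u) ρ = potential ℓ lam j ρ * u ρ := hode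
  have h1' : 0 < deriv u 0 := h1 ▸ one_pos
  have hshift : ∀ ρ ∈ Icc 0 (w - 1), exp 1 ^ 2 * u ρ ^ 2 ≤ u (ρ + 1) ^ 2 := fun ρ hρ => by
    have hgrowth := exp_sub_mul_le_of_deriv_deriv_eq_mul hu hu' hode' hV h0 h1' hρ.1
      (le_add_of_nonneg_right zero_le_one) (by linarith [hρ.2])
    have hu_nonneg := nonneg_of_deriv_deriv_eq_mul hu hu' hode'
      (fun ρ hρ => zero_le_one.trans (hV ρ hρ)) h0.ge h1' ρ ⟨hρ.1, by linarith [hρ.2]⟩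
    rw [add_sub_cancel_left] at hgrowth
    rw [← mul_pow]
    exact pow_le_pow_left₀ (by positivity) hgrowth 2
  have hI := mul_integral_le_integral_of_mul_le_comp_add (f := fun ρ => u ρ ^ 2)
    (hu.continuous.pow 2) zero_le_one hw1 (fun x _ => sq_nonneg (u x)) hshift
  have hIw : 0 ≤ ∫ ρ in (0:ℝ)..w, u ρ ^ 2 := integral_nonneg (by linarith) fun x _ => sq_nonneg _
  rw [div_mul_eq_mul_div, le_div_iff₀' (by positivity)]
  linarith

/-- Let `0 < ℓ ≤ 1`, `λ ≥ 0`, and `j ≥ ⌊√λ⌋ + 1` a natural number.  Set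
`w = arcsinh(1/sinh(ℓ/2))`.  If `u : ℝ → ℝ` is twice differentiable and satisfies
`u'' = (1/4 − λ + (1/4 + 4π²j²/ℓ²)/cosh²ρ) · u` on `[0, w]`, with `u 0 = 0` and
`u' 0 = 1`, then `∫₀^{w−1} u² ≤ (4/e²) ∫₀^{w} u²`. -/
theorem stmt0 (ℓ lam : ℝ) (hℓ0 : 0 < ℓ) (hℓ1 : ℓ ≤ 1) (hlam : 0 ≤ lam)
    (j : ℕ) (hj : j ≥ ⌊Real.sqrt lam⌋₊ + 1)
    (w : ℝ) (hw : w = Real.arsinh (1 / Real.sinh (ℓ / 2)))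
    (u : ℝ → ℝ) (hu : Differentiable ℝ u) (hu' : Differentiable ℝ (deriv u))
    (hode : ∀ ρ ∈ Set.Icc 0 w,
      deriv (deriv u) ρ =
        (1 / 4 - lam + (1 / 4 + 4 * Real.pi ^ 2 * (j : ℝ) ^ 2 / ℓ ^ 2)
          * (1 / Real.cosh ρ ^ 2)) * u ρ)
    (h0 : u 0 = 0) (h1 : deriv u 0 = 1) :
    ∫ ρ in (0:ℝ)..(w - 1), u ρ ^ 2 ≤ 4 / Real.exp 1 ^ 2 * ∫ ρ in (0:ℝ)..w, u ρ ^ 2 :=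
  stmt0_general ℓ lam hℓ0 hℓ1 j hj w hw u hu hu' hode h0 h1
end

section
/- Let 0 < ℓ ≤ 1, let λ ≥ 0, and let j be a natural number with j ≥ ⌊√λ⌋ + 1. Then for every ρ with 0 ≤ ρ ≤ arcsinh(1/sinh(ℓ/2)), one has 1/4 − λ + (1/4 + 4π²j²/ℓ²)·(1/cosh²ρ) ≥ 1. -/
/-! Since `sinh (ℓ/2) ≥ ℓ/2`, the constraint on `ρ` gives `cosh² ρ ≤ 1 + 4/ℓ²`, so
`(4π²j²/ℓ²)/cosh² ρ ≥ 4π²j²/(ℓ² + 4) ≥ 4π²j²/5 > 7j²`, while `λ < j²` and `j ≥ 1`. -/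

open Real

theorem lt_sq_of_floor_sqrt_add_one_le {lam : ℝ} {j : ℕ} (hj : ⌊√lam⌋₊ + 1 ≤ j) :
    lam < (j : ℝ) ^ 2 :=
  lt_sq_of_sqrt_lt <| (Nat.lt_floor_add_one _).trans_le (by exact_mod_cast hj)

theorem cosh_sq_le_one_add_sq_of_le_arsinh {a ρ : ℝ} (hρ0 : 0 ≤ ρ) (hρa : ρ ≤ arsinh a) :
    cosh ρ ^ 2 ≤ 1 + a ^ 2 := by
  have hsinh : sinh ρ ≤ a := by simpa using sinh_le_sinh.mpr hρa
  have := pow_le_pow_left₀ (sinh_nonneg_iff.mpr hρ0) hsinh 2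
  rw [cosh_sq]
  linarith

theorem sq_mul_cosh_sq_le_of_le_arsinh_inv_sinh_half {ℓ ρ : ℝ} (hℓ0 : 0 < ℓ) (hρ0 : 0 ≤ ρ)
    (hρℓ : ρ ≤ arsinh (1 / sinh (ℓ / 2))) :
    ℓ ^ 2 * cosh ρ ^ 2 ≤ ℓ ^ 2 + 4 := by
  have hinv : 1 / sinh (ℓ / 2) ≤ 2 / ℓ := by
    simpa [one_div_div] using
      one_div_le_one_div_of_le (half_pos hℓ0) (self_le_sinh_iff.mpr (half_pos hℓ0).le)
  have hinv_sq := pow_le_pow_left₀ (by positivity) hinv 2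
  have hcosh := cosh_sq_le_one_add_sq_of_le_arsinh hρ0 hρℓ
  calc ℓ ^ 2 * cosh ρ ^ 2 ≤ ℓ ^ 2 * (1 + (2 / ℓ) ^ 2) := by gcongr; linarith
    _ = ℓ ^ 2 + 4 := by field_simp; ring

theorem stmt2_general (ℓ lam : ℝ) (hℓ0 : 0 < ℓ) (hℓ1 : ℓ ≤ 1)
    (j : ℕ) (hj : j ≥ ⌊Real.sqrt lam⌋₊ + 1)
    (ρ : ℝ) (hρ0 : 0 ≤ ρ) (hρw : ρ ≤ Real.arsinh (1 / Real.sinh (ℓ / 2))) :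
    1 / 4 - lam + (1 / 4 + 4 * Real.pi ^ 2 * (j : ℝ) ^ 2 / ℓ ^ 2)
      * (1 / Real.cosh ρ ^ 2) ≥ 1 := by
  have hlam := lt_sq_of_floor_sqrt_add_one_le hj
  have hj1 : (1 : ℝ) ≤ j := by exact_mod_cast le_of_add_le_right hj
  have hπ : 9 < π ^ 2 := by nlinarith [pi_gt_three]
  have hcosh := sq_mul_cosh_sq_le_of_le_arsinh_inv_sinh_half hℓ0 hρ0 hρw
  have hc : 0 < cosh ρ ^ 2 := by positivity
  have hmain :
      4 * π ^ 2 * (j : ℝ) ^ 2 / 5 ≤ 4 * π ^ 2 * (j : ℝ) ^ 2 / ℓ ^ 2 * (1 / cosh ρ ^ 2) := by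
    rw [div_mul_div_comm, mul_one]
    gcongr
    nlinarith
  have hquarter : 0 ≤ 1 / 4 * (1 / cosh ρ ^ 2) := by positivity
  nlinarith

/-- For `0 < ℓ ≤ 1`, `λ ≥ 0`, and a natural number `j ≥ ⌊√λ⌋ + 1`, for every
`ρ ∈ [0, arcsinh(1/sinh(ℓ/2))]` one has
`1/4 − λ + (1/4 + 4π²j²/ℓ²)/cosh²ρ ≥ 1`. -/
theorem stmt2 (ℓ lam : ℝ) (hℓ0 : 0 < ℓ) (hℓ1 : ℓ ≤ 1) (hlam : 0 ≤ lam)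
    (j : ℕ) (hj : j ≥ ⌊Real.sqrt lam⌋₊ + 1)
    (ρ : ℝ) (hρ0 : 0 ≤ ρ) (hρw : ρ ≤ Real.arsinh (1 / Real.sinh (ℓ / 2))) :
    1 / 4 - lam + (1 / 4 + 4 * Real.pi ^ 2 * (j : ℝ) ^ 2 / ℓ ^ 2)
      * (1 / Real.cosh ρ ^ 2) ≥ 1 :=
  stmt2_general ℓ lam hℓ0 hℓ1 j hj ρ hρ0 hρw
end

section
/- For every real w ≥ 1, ∫₀^{w−1} cosh²ρ dρ ≤ (4/e²) · ∫₀^{w} cosh²ρ dρ; equivalently, (2(w−1) + sinh(2(w−1))) / (2w + sinh(2w)) ≤ 4/e². -/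
/-!
For `ρ ≥ c` the term `e^{c-ρ}` of `cosh (ρ - c)` is dominated by `e^{ρ-c}`, so
`cosh (ρ - c) ≤ 2 e^{-c} cosh ρ`. Shifting the variable, `∫₀^{w-c} cosh²` is the integral of
`cosh² (ρ - c)` over `[c, w]`, hence at most `4 e^{-2c} ∫₀^w cosh²`; take `c = 1`. The closed form
`∫₀^a cosh² = (2a + sinh 2a) / 4` turns this into the ratio inequality.
-/

open Real

theorem integral_cosh_sq (a : ℝ) :
    ∫ ρ in (0:ℝ)..a, cosh ρ ^ 2 = (2 * a + sinh (2 * a)) / 4 := by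
  have hderiv : ∀ ρ ∈ Set.uIcc (0:ℝ) a,
      HasDerivAt (fun x : ℝ => x / 2 + sinh (2 * x) / 4) (cosh ρ ^ 2) ρ := by
    intro ρ _
    refine (((hasDerivAt_id ρ).div_const 2).add
      ((((hasDerivAt_id ρ).const_mul 2).sinh).div_const 4)).congr_deriv ?_
    rw [id, mul_one, cosh_two_mul, sinh_sq]
    ring
  rw [intervalIntegral.integral_eq_sub_of_hasDerivAt hderiv
    ((continuous_cosh.pow 2).intervalIntegrable 0 a)]
  simp only [mul_zero, sinh_zero]
  ring

theorem cosh_sub_le_two_mul_exp_neg_mul_cosh {c ρ : ℝ} (hcρ : c ≤ ρ) :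
    cosh (ρ - c) ≤ 2 * exp (-c) * cosh ρ := by
  have hexp : exp (c - ρ) ≤ exp (ρ - c) := exp_le_exp.mpr (by linarith)
  have hsplit : 2 * exp (-c) * cosh ρ = exp (ρ - c) + exp (-ρ - c) := by
    rw [cosh_eq, sub_eq_add_neg ρ, exp_add, sub_eq_add_neg (-ρ), exp_add]; ring
  rw [hsplit, cosh_eq, neg_sub]
  linarith [exp_pos (-ρ - c)]

theorem integral_cosh_sq_sub_le {c w : ℝ} (hc : 0 ≤ c) (hcw : c ≤ w) :
    ∫ ρ in (0:ℝ)..(w - c), cosh ρ ^ 2 ≤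
      (2 * exp (-c)) ^ 2 * ∫ ρ in (0:ℝ)..w, cosh ρ ^ 2 := by
  have hint : ∀ a b : ℝ, IntervalIntegrable (fun ρ => cosh ρ ^ 2) MeasureTheory.volume a b :=
    fun a b => (continuous_cosh.pow 2).intervalIntegrable a b
  have hshift : ∫ ρ in (0:ℝ)..(w - c), cosh ρ ^ 2 = ∫ ρ in c..w, cosh (ρ - c) ^ 2 := by
    rw [intervalIntegral.integral_comp_sub_right (fun ρ => cosh ρ ^ 2), sub_self]
  have htail : ∫ ρ in c..w, cosh ρ ^ 2 ≤ ∫ ρ in (0:ℝ)..w, cosh ρ ^ 2 := by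
    rw [← intervalIntegral.integral_add_adjacent_intervals (hint 0 c) (hint c w)]
    exact le_add_of_nonneg_left
      (intervalIntegral.integral_nonneg hc fun ρ _ => sq_nonneg _)
  calc ∫ ρ in (0:ℝ)..(w - c), cosh ρ ^ 2
      = ∫ ρ in c..w, cosh (ρ - c) ^ 2 := hshift
    _ ≤ ∫ ρ in c..w, (2 * exp (-c)) ^ 2 * cosh ρ ^ 2 := by
        refine intervalIntegral.integral_mono_on hcw
          ((continuous_cosh.comp (continuous_sub_right c)).pow 2 |>.intervalIntegrable _ _)
          ((hint c w).const_mul _) fun ρ hρ => ?_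
        rw [← mul_pow]
        exact pow_le_pow_left₀ (cosh_pos _).le
          (cosh_sub_le_two_mul_exp_neg_mul_cosh hρ.1) 2
    _ = (2 * exp (-c)) ^ 2 * ∫ ρ in c..w, cosh ρ ^ 2 := intervalIntegral.integral_const_mul _ _
    _ ≤ (2 * exp (-c)) ^ 2 * ∫ ρ in (0:ℝ)..w, cosh ρ ^ 2 := by gcongr

/-- For every real `w ≥ 1`,
`∫₀^{w−1} cosh²ρ dρ ≤ (4/e²) ∫₀^{w} cosh²ρ dρ`; equivalently,
`(2(w−1) + sinh(2(w−1))) / (2w + sinh(2w)) ≤ 4/e²`. -/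
theorem stmt4 (w : ℝ) (hw : 1 ≤ w) :
    (∫ ρ in (0:ℝ)..(w - 1), Real.cosh ρ ^ 2 ≤
      4 / Real.exp 1 ^ 2 * ∫ ρ in (0:ℝ)..w, Real.cosh ρ ^ 2) ∧
    (2 * (w - 1) + Real.sinh (2 * (w - 1))) / (2 * w + Real.sinh (2 * w)) ≤
      4 / Real.exp 1 ^ 2 := by
  have hconst : (2 * exp (-1)) ^ 2 = 4 / exp 1 ^ 2 := by
    rw [exp_neg, mul_pow, inv_pow, div_eq_mul_inv]; norm_num
  have hintegral := hconst ▸ integral_cosh_sq_sub_le zero_le_one hw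
  refine ⟨hintegral, ?_⟩
  have hpos : 0 < 2 * w + sinh (2 * w) := by
    have := sinh_nonneg_iff.mpr (show (0:ℝ) ≤ 2 * w by linarith)
    linarith
  rw [integral_cosh_sq, integral_cosh_sq] at hintegral
  rw [div_le_iff₀ hpos]
  linarith
end

section
/- Let w ≥ 1 and let u : ℝ → ℝ be twice continuously differentiable with u''(ρ) ≥ u(ρ) for all ρ ∈ [0, w]. Assume either (u(0) = 0 and u'(0) = 1) or (u(0) = 1 and u'(0) = 0). Then ∫₀^{w−1} u(ρ)² dρ ≤ (4/e²) · ∫₀^{w} u(ρ)² dρ. -/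
/-! A function with `u'' ≥ u` dominates the solution of `y'' = y` with the same initial data,
`u ρ cosh (t - ρ) + u' ρ sinh (t - ρ)`. From `u 0, u' 0 ≥ 0` this gives `u ≥ 0` and `u' ≥ 0`,
and then `u (ρ + 1) ≥ u ρ cosh 1 ≥ (e / 2) u ρ`. Squaring, `u ρ ² ≤ (4 / e²) u (ρ + 1)²` on
`[0, w - 1]`, and integrating this shifted inequality gives the bound. -/

open Real Set

theorem monotoneOn_Icc_of_hasDerivAt_nonneg {f f' : ℝ → ℝ} {a b : ℝ}
    (hf : ∀ x ∈ Icc a b, HasDerivAt f (f' x) x) (hf' : ∀ x ∈ Icc a b, 0 ≤ f' x) :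
    MonotoneOn f (Icc a b) :=
  monotoneOn_of_hasDerivWithinAt_nonneg (convex_Icc a b)
    (fun x hx => (hf x hx).continuousAt.continuousWithinAt)
    (fun x hx => (hf x (interior_subset hx)).hasDerivWithinAt)
    (fun x hx => hf' x (interior_subset hx))

section SecondOrderInequality

variable {g g' g'' : ℝ → ℝ} {a b : ℝ}

/-- Since `g'' - g = e^{t} (e^{-t} (g + g'))'`, the weighted sum `e^{-t} (g + g')` increases;
then `(e^{t} g)' = e^{t} (g + g') ≥ 0`. -/
theorem nonneg_of_self_le_second_deriv
    (hg : ∀ t ∈ Icc a b, HasDerivAt g (g' t) t) (hg' : ∀ t ∈ Icc a b, HasDerivAt g' (g'' t) t)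
    (hle : ∀ t ∈ Icc a b, g t ≤ g'' t) (ha : 0 ≤ g a) (ha' : 0 ≤ g a + g' a) :
    ∀ t ∈ Icc a b, 0 ≤ g t := by
  have hexp_neg (t : ℝ) : HasDerivAt (fun s => exp (-s)) (-exp (-t)) t := by
    simpa using (hasDerivAt_neg t).exp
  have hsum : ∀ t ∈ Icc a b, 0 ≤ g t + g' t := by
    have hmono : MonotoneOn (fun t => exp (-t) * (g t + g' t)) (Icc a b) :=
      monotoneOn_Icc_of_hasDerivAt_nonneg
        (fun t ht => ((hexp_neg t).mul ((hg t ht).add (hg' t ht))).congr_deriv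
          (by simp only [Pi.add_apply]; ring))
        (fun t ht => mul_nonneg (exp_pos _).le (sub_nonneg.2 (hle t ht)))
    intro t ht
    have h := hmono (left_mem_Icc.2 (ht.1.trans ht.2)) ht ht.1
    exact nonneg_of_mul_nonneg_right ((mul_nonneg (exp_pos _).le ha').trans h) (exp_pos _)
  have hmono : MonotoneOn (fun t => exp t * g t) (Icc a b) :=
    monotoneOn_Icc_of_hasDerivAt_nonneg
      (fun t ht => ((hasDerivAt_exp t).mul (hg t ht)).congr_deriv (by ring))
      (fun t ht => mul_nonneg (exp_pos t).le (hsum t ht))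
  intro t ht
  have h := hmono (left_mem_Icc.2 (ht.1.trans ht.2)) ht ht.1
  exact nonneg_of_mul_nonneg_right ((mul_nonneg (exp_pos _).le ha).trans h) (exp_pos _)

/-- The left side solves `y'' = y`, so the difference `g - y` has zero initial data and still
satisfies `(g - y)'' ≥ g - y`. -/
theorem cosh_sinh_le_of_self_le_second_deriv
    (hg : ∀ t ∈ Icc a b, HasDerivAt g (g' t) t) (hg' : ∀ t ∈ Icc a b, HasDerivAt g' (g'' t) t)
    (hle : ∀ t ∈ Icc a b, g t ≤ g'' t) :
    ∀ t ∈ Icc a b, g a * cosh (t - a) + g' a * sinh (t - a) ≤ g t := by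
  have hshift (t : ℝ) : HasDerivAt (fun s => s - a) 1 t := (hasDerivAt_id t).sub_const a
  have hcosh (t : ℝ) : HasDerivAt (fun s => cosh (s - a)) (sinh (t - a)) t := by
    simpa using (hshift t).cosh
  have hsinh (t : ℝ) : HasDerivAt (fun s => sinh (s - a)) (cosh (t - a)) t := by
    simpa using (hshift t).sinh
  have hnonneg := nonneg_of_self_le_second_deriv
    (g := fun t => g t - (g a * cosh (t - a) + g' a * sinh (t - a)))
    (g' := fun t => g' t - (g a * sinh (t - a) + g' a * cosh (t - a)))
    (g'' := fun t => g'' t - (g a * cosh (t - a) + g' a * sinh (t - a)))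
    (fun t ht => (hg t ht).sub (((hcosh t).const_mul _).add ((hsinh t).const_mul _)))
    (fun t ht => (hg' t ht).sub (((hsinh t).const_mul _).add ((hcosh t).const_mul _)))
    (fun t ht => sub_le_sub_right (hle t ht) _) (by simp) (by simp)
  exact fun t ht => sub_nonneg.1 (hnonneg t ht)

theorem deriv_nonneg_of_self_le_second_deriv
    (hg : ∀ t ∈ Icc a b, HasDerivAt g (g' t) t) (hg' : ∀ t ∈ Icc a b, HasDerivAt g' (g'' t) t)
    (hle : ∀ t ∈ Icc a b, g t ≤ g'' t) (ha : 0 ≤ g a) (ha' : 0 ≤ g' a) :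
    ∀ t ∈ Icc a b, 0 ≤ g' t := by
  have hg_nonneg := nonneg_of_self_le_second_deriv hg hg' hle ha (add_nonneg ha ha')
  have hmono : MonotoneOn g' (Icc a b) :=
    monotoneOn_Icc_of_hasDerivAt_nonneg hg' fun t ht => (hg_nonneg t ht).trans (hle t ht)
  exact fun t ht => ha'.trans (hmono (left_mem_Icc.2 (ht.1.trans ht.2)) ht ht.1)

theorem exp_one_div_two_mul_le_of_self_le_second_deriv
    (hg : ∀ t ∈ Icc a b, HasDerivAt g (g' t) t) (hg' : ∀ t ∈ Icc a b, HasDerivAt g' (g'' t) t)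
    (hle : ∀ t ∈ Icc a b, g t ≤ g'' t) (ha : 0 ≤ g a) (ha' : 0 ≤ g' a)
    {t : ℝ} (hat : a ≤ t) (htb : t + 1 ≤ b) :
    exp 1 / 2 * g t ≤ g (t + 1) := by
  have hsub : Icc t b ⊆ Icc a b := Icc_subset_Icc_left hat
  have ht : t ∈ Icc a b := ⟨hat, by linarith⟩
  have hgt : 0 ≤ g t := nonneg_of_self_le_second_deriv hg hg' hle ha (add_nonneg ha ha') t ht
  have hg't : 0 ≤ g' t := deriv_nonneg_of_self_le_second_deriv hg hg' hle ha ha' t ht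
  have hcomp := cosh_sinh_le_of_self_le_second_deriv (fun s hs => hg s (hsub hs))
    (fun s hs => hg' s (hsub hs)) (fun s hs => hle s (hsub hs)) (t + 1) ⟨by linarith, htb⟩
  rw [add_sub_cancel_left] at hcomp
  have hcosh : exp 1 / 2 ≤ cosh 1 := by
    rw [cosh_eq]; linarith [exp_pos (-1)]
  have hsinh : 0 ≤ sinh 1 := sinh_nonneg_iff.2 zero_le_one
  nlinarith [mul_le_mul_of_nonneg_right hcosh hgt, mul_nonneg hg't hsinh]

end SecondOrderInequality

theorem integral_le_mul_integral_of_le_mul_shift {f : ℝ → ℝ} {c d w : ℝ} (hf : Continuous f)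
    (hc : 0 ≤ c) (hd : 0 ≤ d) (hdw : d ≤ w) (hf_nonneg : ∀ x ∈ Icc 0 d, 0 ≤ f x)
    (hshift : ∀ x ∈ Icc 0 (w - d), f x ≤ c * f (x + d)) :
    ∫ x in (0 : ℝ)..(w - d), f x ≤ c * ∫ x in (0 : ℝ)..w, f x := by
  have hshifted : ∫ x in (0 : ℝ)..(w - d), c * f (x + d) = c * ∫ x in d..w, f x := by
    rw [intervalIntegral.integral_const_mul, intervalIntegral.integral_comp_add_right]
    simp
  have hsplit : (∫ x in (0 : ℝ)..d, f x) + ∫ x in d..w, f x = ∫ x in (0 : ℝ)..w, f x :=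
    intervalIntegral.integral_add_adjacent_intervals
      (hf.intervalIntegrable 0 d) (hf.intervalIntegrable d w)
  have hhead : 0 ≤ ∫ x in (0 : ℝ)..d, f x := intervalIntegral.integral_nonneg hd hf_nonneg
  calc ∫ x in (0 : ℝ)..(w - d), f x
      ≤ ∫ x in (0 : ℝ)..(w - d), c * f (x + d) :=
        intervalIntegral.integral_mono_on (by linarith) (hf.intervalIntegrable _ _)
          ((continuous_const.mul (hf.comp (continuous_add_const d))).intervalIntegrable _ _) hshift
    _ = c * ∫ x in d..w, f x := hshifted
    _ ≤ c * ∫ x in (0 : ℝ)..w, f x := mul_le_mul_of_nonneg_left (by linarith) hc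

/-- Let `w ≥ 1` and let `u : ℝ → ℝ` be twice continuously differentiable with
`u'' ρ ≥ u ρ` for all `ρ ∈ [0, w]`.  Assume either (`u 0 = 0` and `u' 0 = 1`) or
(`u 0 = 1` and `u' 0 = 0`).  Then `∫₀^{w−1} u² ≤ (4/e²) ∫₀^{w} u²`. -/
theorem stmt5 (w : ℝ) (hw : 1 ≤ w) (u : ℝ → ℝ) (hu : ContDiff ℝ 2 u)
    (hineq : ∀ ρ ∈ Set.Icc 0 w, deriv (deriv u) ρ ≥ u ρ)
    (hinit : (u 0 = 0 ∧ deriv u 0 = 1) ∨ (u 0 = 1 ∧ deriv u 0 = 0)) :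
    ∫ ρ in (0:ℝ)..(w - 1), u ρ ^ 2 ≤ 4 / Real.exp 1 ^ 2 * ∫ ρ in (0:ℝ)..w, u ρ ^ 2 := by
  have hu' : ContDiff ℝ 1 (deriv u) := hu.iterate_deriv' 1 1
  have hd : ∀ t ∈ Icc 0 w, HasDerivAt u (deriv u t) t := fun t _ =>
    (hu.differentiable two_ne_zero t).hasDerivAt
  have hd' : ∀ t ∈ Icc 0 w, HasDerivAt (deriv u) (deriv (deriv u) t) t := fun t _ =>
    (hu'.differentiable one_ne_zero t).hasDerivAt
  obtain ⟨hu0, hu'0⟩ : 0 ≤ u 0 ∧ 0 ≤ deriv u 0 := by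
    rcases hinit with ⟨h, h'⟩ | ⟨h, h'⟩ <;> simp [h, h']
  have hnonneg := nonneg_of_self_le_second_deriv hd hd' hineq hu0 (add_nonneg hu0 hu'0)
  refine integral_le_mul_integral_of_le_mul_shift (hu.continuous.pow 2) (by positivity)
    zero_le_one hw (fun _ _ => sq_nonneg _) fun ρ hρ => ?_
  have hgrowth := exp_one_div_two_mul_le_of_self_le_second_deriv hd hd' hineq hu0 hu'0
    hρ.1 (by linarith [hρ.2])
  have huρ : 0 ≤ exp 1 / 2 * u ρ :=
    mul_nonneg (by positivity) (hnonneg ρ ⟨hρ.1, by linarith [hρ.2]⟩)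
  rw [div_mul_eq_mul_div, le_div_iff₀ (by positivity)]
  nlinarith [pow_le_pow_left₀ huρ hgrowth 2]
end

section
/- For every real ℓ with 0 < ℓ ≤ 1, setting w = arcsinh(1/sinh(ℓ/2)), one has ℓ·cosh(w − 1) ≤ (2/e)·√5 < 2. -/
/-!
Since `exp (arsinh x) = x + √(1 + x²)` and `ℓ ≤ 2 sinh (ℓ / 2)`, the quantity `ℓ e^w` is at most
`2 + √(ℓ² + 4) ≤ 2 + √5`, while `ℓ e^{-w} ≤ ℓ sinh (ℓ / 2) / 2 < 1 / 2`. Writing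
`2 cosh (w - 1) = e^w / e + e · e^{-w}`, the claim reduces to `2 + √5 + e² / 2 ≤ 4 √5`,
which holds because `e < 3`.
-/

open Real

theorem exp_neg_arsinh_le_inv_two_mul {x : ℝ} (hx : 0 < x) : exp (-arsinh x) ≤ (2 * x)⁻¹ := by
  rw [exp_neg, exp_arsinh]
  have : x ≤ √(1 + x ^ 2) := le_sqrt_of_sq_le (by linarith)
  gcongr
  linarith

theorem mul_exp_arsinh_inv_sinh_half_le {ℓ : ℝ} (hℓ : 0 < ℓ) :
    ℓ * exp (arsinh (1 / sinh (ℓ / 2))) ≤ 2 + √(ℓ ^ 2 + 4) := by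
  have hs : 0 < sinh (ℓ / 2) := sinh_pos_iff.mpr (by positivity)
  have hq : ℓ / sinh (ℓ / 2) ≤ 2 := by
    rw [div_le_iff₀ hs]; linarith [self_le_sinh_iff.mpr (by positivity : 0 ≤ ℓ / 2)]
  have hroot : ℓ * √(1 + (1 / sinh (ℓ / 2)) ^ 2) = √(ℓ ^ 2 + (ℓ / sinh (ℓ / 2)) ^ 2) := by
    rw [← sqrt_sq hℓ.le, ← sqrt_mul (sq_nonneg ℓ), sqrt_sq hℓ.le]
    ring_nf
  rw [exp_arsinh, mul_add, hroot, mul_one_div]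
  gcongr
  exact pow_le_pow_left₀ (by positivity) hq 2 |>.trans_eq (by norm_num)

theorem sinh_half_lt_one : sinh (1 / 2) < 1 := by
  have h : exp (1 / 2) < 2 := by
    rw [exp_half, sqrt_lt' two_pos]
    linarith [exp_one_lt_three]
  rw [sinh_eq]
  linarith [exp_pos (-(1 / 2))]

theorem mul_exp_neg_arsinh_inv_sinh_half_lt {ℓ : ℝ} (hℓ0 : 0 < ℓ) (hℓ1 : ℓ ≤ 1) :
    ℓ * exp (-arsinh (1 / sinh (ℓ / 2))) < 1 / 2 := by
  have hs : 0 < sinh (ℓ / 2) := sinh_pos_iff.mpr (by positivity)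
  have hs1 : sinh (ℓ / 2) < 1 :=
    (sinh_le_sinh.mpr (by linarith)).trans_lt sinh_half_lt_one
  calc ℓ * exp (-arsinh (1 / sinh (ℓ / 2))) ≤ ℓ * (2 * (1 / sinh (ℓ / 2)))⁻¹ := by
        gcongr; exact exp_neg_arsinh_le_inv_two_mul (by positivity)
    _ = ℓ * sinh (ℓ / 2) / 2 := by field_simp
    _ < 1 / 2 := by
        rw [div_lt_div_iff_of_pos_right two_pos]
        nlinarith

theorem cosh_sub_one_eq (w : ℝ) : cosh (w - 1) = (exp w / exp 1 + exp 1 * exp (-w)) / 2 := by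
  rw [cosh_eq, exp_sub, neg_sub, sub_eq_add_neg, exp_add]

/-- For every `0 < ℓ ≤ 1`, setting `w = arcsinh(1/sinh(ℓ/2))`, one has
`ℓ·cosh(w − 1) ≤ (2/e)·√5 < 2`. -/
theorem stmt6 (ℓ : ℝ) (hℓ0 : 0 < ℓ) (hℓ1 : ℓ ≤ 1)
    (w : ℝ) (hw : w = Real.arsinh (1 / Real.sinh (ℓ / 2))) :
    ℓ * Real.cosh (w - 1) ≤ 2 / Real.exp 1 * Real.sqrt 5 ∧
    2 / Real.exp 1 * Real.sqrt 5 < 2 := by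
  have he : 0 < exp 1 := exp_pos 1
  have hgrowth : ℓ * exp w ≤ 2 + √5 :=
    hw ▸ (mul_exp_arsinh_inv_sinh_half_le hℓ0).trans (by gcongr; nlinarith)
  have hdecay : ℓ * exp (-w) < 1 / 2 := hw ▸ mul_exp_neg_arsinh_inv_sinh_half_lt hℓ0 hℓ1
  have hsqrt5 : 13 / 6 < √5 := by rw [lt_sqrt (by norm_num)]; norm_num
  have hsqrt5_lt_e : √5 < exp 1 := by rw [sqrt_lt' he]; nlinarith [exp_one_gt_d9]
  constructor
  · calc ℓ * cosh (w - 1) = (ℓ * exp w / exp 1 + exp 1 * (ℓ * exp (-w))) / 2 := by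
          rw [cosh_sub_one_eq]; ring
      _ ≤ ((2 + √5) / exp 1 + exp 1 * (1 / 2)) / 2 := by gcongr
      _ ≤ 2 / exp 1 * √5 := by
          field_simp
          nlinarith [exp_one_lt_three]
  · rw [div_mul_eq_mul_div, div_lt_iff₀ he]
    linarith
end

section
/- Let 0 < δ < 1/2 and let w be a real number with w ≥ 1/δ + 2. Then ∫₀^{w−1/δ} cosh²(δρ) dρ ≤ (4/e²) · ∫₀^{w} cosh²(δρ) dρ. -/
/-!
For `t ≥ 0` we have `e^{2t}/4 ≤ cosh² t ≤ e^{2t}`, so both integrals are comparable, up to the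
factor 4, to integrals of `e^{2δρ}`. Shortening the interval `[0, w]` by `1/δ` multiplies
`e^{2δ w} - 1` by at most `e^{-2}`, which gives the constant `4 / e²`.
-/

open Real

lemma cosh_sq_le_exp_two_mul {t : ℝ} (ht : 0 ≤ t) : cosh t ^ 2 ≤ exp (2 * t) := by
  have hle : cosh t ≤ exp t := by
    rw [cosh_eq]
    linarith [exp_le_exp.mpr (neg_le_self ht)]
  rw [two_mul, exp_add, ← sq]
  exact pow_le_pow_left₀ (cosh_pos t).le hle 2

lemma exp_two_mul_div_four_le_cosh_sq (t : ℝ) : exp (2 * t) / 4 ≤ cosh t ^ 2 := by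
  have hle : exp t / 2 ≤ cosh t := by
    rw [cosh_eq]
    linarith [exp_pos (-t)]
  calc exp (2 * t) / 4 = (exp t / 2) ^ 2 := by rw [two_mul, exp_add]; ring
    _ ≤ cosh t ^ 2 := pow_le_pow_left₀ (by positivity) hle 2

lemma integral_exp_mul {c : ℝ} (hc : c ≠ 0) (a : ℝ) :
    ∫ ρ in (0 : ℝ)..a, exp (c * ρ) = (exp (c * a) - 1) / c := by
  rw [intervalIntegral.integral_comp_mul_left exp hc, integral_exp]
  simp [div_eq_inv_mul]

lemma integral_exp_mul_sub_le {c : ℝ} (hc : 0 < c) {h : ℝ} (hh : 0 ≤ h) (a : ℝ) :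
    ∫ ρ in (0 : ℝ)..(a - h), exp (c * ρ) ≤ exp (-(c * h)) * ∫ ρ in (0 : ℝ)..a, exp (c * ρ) := by
  rw [integral_exp_mul hc.ne', integral_exp_mul hc.ne', ← mul_div_assoc]
  have hshift : exp (-(c * h)) * (exp (c * a) - 1) = exp (c * (a - h)) - exp (-(c * h)) := by
    rw [mul_sub, mul_one, ← exp_add]; ring_nf
  rw [hshift]
  gcongr
  exact exp_le_one_iff.mpr (neg_nonpos.mpr (mul_nonneg hc.le hh))

lemma integral_cosh_sq_le_integral_exp {δ : ℝ} (hδ : 0 ≤ δ) {a : ℝ} (ha : 0 ≤ a) :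
    ∫ ρ in (0 : ℝ)..a, cosh (δ * ρ) ^ 2 ≤ ∫ ρ in (0 : ℝ)..a, exp (2 * δ * ρ) := by
  refine intervalIntegral.integral_mono_on ha (Continuous.intervalIntegrable (by fun_prop) _ _)
    (Continuous.intervalIntegrable (by fun_prop) _ _) fun ρ hρ => ?_
  rw [mul_assoc]
  exact cosh_sq_le_exp_two_mul (mul_nonneg hδ hρ.1)

lemma integral_exp_le_four_mul_integral_cosh_sq (δ : ℝ) {a : ℝ} (ha : 0 ≤ a) :
    ∫ ρ in (0 : ℝ)..a, exp (2 * δ * ρ) ≤ 4 * ∫ ρ in (0 : ℝ)..a, cosh (δ * ρ) ^ 2 := by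
  rw [← intervalIntegral.integral_const_mul]
  refine intervalIntegral.integral_mono_on ha (Continuous.intervalIntegrable (by fun_prop) _ _)
    (Continuous.intervalIntegrable (by fun_prop) _ _) fun ρ _ => ?_
  rw [mul_assoc]
  linarith [exp_two_mul_div_four_le_cosh_sq (δ * ρ)]

theorem stmt7_general (δ : ℝ) (hδ0 : 0 < δ)
    (w : ℝ) (hw : w ≥ 1 / δ + 2) :
    ∫ ρ in (0:ℝ)..(w - 1 / δ), Real.cosh (δ * ρ) ^ 2 ≤
      4 / Real.exp 1 ^ 2 * ∫ ρ in (0:ℝ)..w, Real.cosh (δ * ρ) ^ 2 := by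
  have hδinv : 0 < 1 / δ := by positivity
  have hexp : exp (-(2 * δ * (1 / δ))) = 1 / exp 1 ^ 2 := by
    rw [show 2 * δ * (1 / δ) = 1 + 1 by field_simp; norm_num, exp_neg, exp_add, ← sq, one_div]
  calc ∫ ρ in (0:ℝ)..(w - 1 / δ), cosh (δ * ρ) ^ 2
      ≤ ∫ ρ in (0:ℝ)..(w - 1 / δ), exp (2 * δ * ρ) :=
        integral_cosh_sq_le_integral_exp hδ0.le (by linarith)
    _ ≤ exp (-(2 * δ * (1 / δ))) * ∫ ρ in (0:ℝ)..w, exp (2 * δ * ρ) :=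
        integral_exp_mul_sub_le (by positivity) hδinv.le w
    _ ≤ 1 / exp 1 ^ 2 * (4 * ∫ ρ in (0:ℝ)..w, cosh (δ * ρ) ^ 2) := by
        rw [hexp]
        gcongr
        exact integral_exp_le_four_mul_integral_cosh_sq δ (by linarith)
    _ = 4 / exp 1 ^ 2 * ∫ ρ in (0:ℝ)..w, cosh (δ * ρ) ^ 2 := by ring

/-- Let `0 < δ < 1/2` and let `w ≥ 1/δ + 2`.  Then
`∫₀^{w−1/δ} cosh²(δρ) dρ ≤ (4/e²) ∫₀^{w} cosh²(δρ) dρ`. -/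
theorem stmt7 (δ : ℝ) (hδ0 : 0 < δ) (hδ1 : δ < 1 / 2)
    (w : ℝ) (hw : w ≥ 1 / δ + 2) :
    ∫ ρ in (0:ℝ)..(w - 1 / δ), Real.cosh (δ * ρ) ^ 2 ≤
      4 / Real.exp 1 ^ 2 * ∫ ρ in (0:ℝ)..w, Real.cosh (δ * ρ) ^ 2 :=
  stmt7_general δ hδ0 w hw
end
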